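/- Let S be a positive integer and d̄ = 2^S. For every right stochastic matrix φ̄* ∈ 𝒮(d̄) and every Haar vector h ∈ ℋ, it holds that Σ_{j=1}^{d̄} |⟨φ̄* − I_{d̄}, h ⊗ e^{(j)}⟩| / ⟨h ⊗ e^{(j)}, h ⊗ e^{(j)}⟩ ≤ 2, where I_{d̄} is the d̄ × d̄ identity matrix and ⟨·,·⟩ is the Frobenius inner product. -/

import Mathlib

open scoped Classical

noncomputable section

/-- The Haar vector `h^(s,l)` in `ℝ^(2^S)` (1-based math indices mapped to 0-based `Fin`). -/
def haarVec (S s l : ℕ) : Fin (2 ^ S) → ℝ := fun i =>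
  if 2 ^ s * (l - 1) ≤ (i : ℕ) ∧ (i : ℕ) < 2 ^ s * (l - 1) + 2 ^ (s - 1) then 1
  else if 2 ^ s * (l - 1) + 2 ^ (s - 1) ≤ (i : ℕ) ∧ (i : ℕ) < 2 ^ s * l then -1
  else 0

/-- The Haar collection ℋ: the all-ones vector together with all `h^(s,l)`,
`s ∈ [1,S]`, `l ∈ [1, 2^(S-s)]`. -/
def haarSet (S : ℕ) : Set (Fin (2 ^ S) → ℝ) :=
  {fun _ => (1 : ℝ)} ∪
    {v | ∃ s l : ℕ, 1 ≤ s ∧ s ≤ S ∧ 1 ≤ l ∧ l ≤ 2 ^ (S - s) ∧ v = haarVec S s l}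

/-- Outer product of two vectors, as a matrix. -/
def outer {n : ℕ} (x y : Fin n → ℝ) : Matrix (Fin n) (Fin n) ℝ :=
  Matrix.of fun i j => x i * y j

/-- Frobenius inner product of two square matrices. -/
def frob {n : ℕ} (A B : Matrix (Fin n) (Fin n) ℝ) : ℝ := ∑ i, ∑ j, A i j * B i j

/-- The `j`-th canonical basis vector `e^(j)`. -/
def eVec {n : ℕ} (j : Fin n) : Fin n → ℝ := fun k => if k = j then 1 else 0

/-- Right stochastic matrix: nonnegative entries, each row sums to 1. -/
def IsStochastic {n : ℕ} (M : Matrix (Fin n) (Fin n) ℝ) : Prop :=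
  (∀ i j, 0 ≤ M i j) ∧ ∀ i, ∑ j, M i j = 1

/-- Membership in the probability simplex Δ(n). -/
def InSimplex {n : ℕ} (p : Fin n → ℝ) : Prop := (∀ i, 0 ≤ p i) ∧ ∑ i, p i = 1

/-- Action of a (stochastic) matrix on a distribution: `(φ(p))_j = Σ_i p_i φ_{i,j}`. -/
def act {n : ℕ} (M : Matrix (Fin n) (Fin n) ℝ) (p : Fin n → ℝ) : Fin n → ℝ :=
  fun j => ∑ i, p i * M i j

/-- `Σ_{i=1}^{n-1} 1[M_i ≠ M_{i+1}]`: the number of consecutive-row changes of `M`. -/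
def rowSwitch {n : ℕ} (M : Matrix (Fin n) (Fin n) ℝ) : ℕ :=
  (Finset.univ.filter fun i : Fin n =>
    ∃ h : (i : ℕ) + 1 < n, M i ≠ M ⟨(i : ℕ) + 1, h⟩).card

/-- Uniformity `d^unif_φ`: the frequency of the most frequent row of `φ`. -/
def dUnif {n : ℕ} (M : Matrix (Fin n) (Fin n) ℝ) : ℕ :=
  Finset.univ.sup fun i : Fin n => (Finset.univ.filter fun k : Fin n => M k = M i).card

/-- Degree of self-map `d^self_φ`: the number of rows `i` with `φ_i = e^(i)`. -/
def dSelf {n : ℕ} (M : Matrix (Fin n) (Fin n) ℝ) : ℕ :=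
  (Finset.univ.filter fun i : Fin n => M i = eVec i).card

/-! Pairing `φ - 1` with `h ⊗ e^(j)` picks out `Σ_i (φ - 1)_{ij} h_i`, and the normalising factor
is `Σ_i h_i²`. Summing over `j` and exchanging the sums bounds the numerators by
`Σ_i |h_i| Σ_j |(φ - 1)_{ij}|`; each row of `φ - 1` has absolute sum at most `2`, and since Haar
entries lie in `{-1, 0, 1}` we have `|h_i| = h_i²`, so the total is at most `2 Σ_i h_i²`. -/

lemma frob_outer_eVec {n : ℕ} (A : Matrix (Fin n) (Fin n) ℝ) (x : Fin n → ℝ) (j : Fin n) :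
    frob A (outer x (eVec j)) = ∑ i, A i j * x i := by
  simp [frob, outer, eVec]

lemma frob_outer_eVec_self {n : ℕ} (x : Fin n → ℝ) (j : Fin n) :
    frob (outer x (eVec j)) (outer x (eVec j)) = ∑ i, x i ^ 2 := by
  rw [frob_outer_eVec]
  simp [outer, eVec, sq]

lemma IsStochastic.sum_abs_sub_one_le_two {n : ℕ} {M : Matrix (Fin n) (Fin n) ℝ}
    (hM : IsStochastic M) (i : Fin n) : ∑ j, |(M - 1) i j| ≤ 2 := by
  have hentry : ∀ j, |(M - 1) i j| ≤ M i j + (1 : Matrix (Fin n) (Fin n) ℝ) i j := fun j =>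
    (abs_sub _ _).trans_eq <| by
      rw [abs_of_nonneg (hM.1 i j), abs_of_nonneg (Matrix.zero_le_one_elem i j)]
  calc ∑ j, |(M - 1) i j| ≤ ∑ j, (M i j + (1 : Matrix (Fin n) (Fin n) ℝ) i j) :=
        Finset.sum_le_sum fun j _ => hentry j
    _ = 2 := by norm_num [Finset.sum_add_distrib, hM.2 i, Matrix.one_apply]

lemma sum_abs_sum_mul_le {ι κ : Type*} [Fintype ι] [Fintype κ] (A : Matrix ι κ ℝ) (x : ι → ℝ) {c : ℝ}
    (hA : ∀ i, ∑ j, |A i j| ≤ c) : ∑ j, |∑ i, A i j * x i| ≤ c * ∑ i, |x i| :=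
  calc ∑ j, |∑ i, A i j * x i| ≤ ∑ j, ∑ i, |A i j| * |x i| :=
        Finset.sum_le_sum fun j _ => (Finset.abs_sum_le_sum_abs _ _).trans_eq <| by simp [abs_mul]
    _ = ∑ i, (∑ j, |A i j|) * |x i| := by rw [Finset.sum_comm]; simp [Finset.sum_mul]
    _ ≤ ∑ i, c * |x i| := Finset.sum_le_sum fun i _ => by gcongr; exact hA i
    _ = c * ∑ i, |x i| := (Finset.mul_sum _ _ _).symm

lemma abs_eq_sq_of_mem_haarSet {S : ℕ} {h : Fin (2 ^ S) → ℝ} (hh : h ∈ haarSet S) (i : Fin (2 ^ S)) :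
    |h i| = h i ^ 2 := by
  rcases hh with rfl | ⟨s, l, -, -, -, -, rfl⟩
  · simp
  · unfold haarVec
    split_ifs <;> norm_num

theorem sum_abs_coeff_stochastic_sub_id_le_two_general (S : ℕ)
    (φ : Matrix (Fin (2 ^ S)) (Fin (2 ^ S)) ℝ) (hφ : IsStochastic φ) :
    ∀ h ∈ haarSet S,
      ∑ j : Fin (2 ^ S),
        |frob (φ - 1) (outer h (eVec j))| / frob (outer h (eVec j)) (outer h (eVec j)) ≤ 2 := by
  intro h hh
  simp_rw [frob_outer_eVec_self, frob_outer_eVec, ← Finset.sum_div]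
  refine div_le_of_le_mul₀ (by positivity) zero_le_two ?_
  calc ∑ j, |∑ i, (φ - 1) i j * h i| ≤ 2 * ∑ i, |h i| :=
        sum_abs_sum_mul_le _ _ hφ.sum_abs_sub_one_le_two
    _ = 2 * ∑ i, h i ^ 2 := by simp only [abs_eq_sq_of_mem_haarSet hh]

/-- for every right stochastic `φ̄*` and every Haar vector `h ∈ ℋ`,
`Σ_j |⟨φ̄* − I, h ⊗ e^(j)⟩| / ⟨h ⊗ e^(j), h ⊗ e^(j)⟩ ≤ 2`. -/
theorem sum_abs_coeff_stochastic_sub_id_le_two (S : ℕ) (hS : 1 ≤ S)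
    (φ : Matrix (Fin (2 ^ S)) (Fin (2 ^ S)) ℝ) (hφ : IsStochastic φ) :
    ∀ h ∈ haarSet S,
      ∑ j : Fin (2 ^ S),
        |frob (φ - 1) (outer h (eVec j))| / frob (outer h (eVec j)) (outer h (eVec j)) ≤ 2 :=
  sum_abs_coeff_stochastic_sub_id_le_two_general S φ hφ
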